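/- arXiv:2503.01527 — 4 statements merged into one kernel-verified Lean document; each statement's English description precedes it below -/
import Mathlib

section
/- Let τ > 0 and δ > 0. There exists ε₀ > 0 such that for all 0 < r ≤ 2ε₀, the cubic τλ³ + λ² + (δ+τ)r²λ + r² = 0 has a real root λ₁(r) satisfying λ₁(r) = -1/τ + δ r² + O(r⁴) as r → 0. -/
set_option maxHeartbeats 1000000 in
theorem stmt_9 (τ δ : ℝ) (hτ : 0 < τ) (hδ : 0 < δ) :
    ∃ ε₀ : ℝ, 0 < ε₀ ∧ ∃ l₁ : ℝ → ℝ, ∃ C : ℝ, 0 < C ∧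
      ∀ r : ℝ, 0 < r → r ≤ 2 * ε₀ →
        τ * l₁ r ^ 3 + l₁ r ^ 2 + (δ + τ) * r ^ 2 * l₁ r + r ^ 2 = 0 ∧
        |l₁ r - (-(1 / τ) + δ * r ^ 2)| ≤ C * r ^ 4 := by
  obtain ⟨M, hM⟩ : ∃ M : ℝ, M = 8*τ*δ^3 + 8*δ^2 + 2*δ*(δ+τ) := ⟨_, rfl⟩
  obtain ⟨C, hC⟩ : ∃ C : ℝ, C = τ*M + 1 := ⟨_, rfl⟩
  have hMpos : 0 < M := by rw [hM]; positivity
  have hCpos : 0 < C := by rw [hC]; positivity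
  obtain ⟨ε₀, hε₀, hε1, hε2⟩ : ∃ ε₀ : ℝ, 0 < ε₀ ∧ 2*ε₀ ≤ 1 ∧ C*(2*ε₀)^2 ≤ δ := by
    have hsq : 0 < Real.sqrt (δ/C) := Real.sqrt_pos.mpr (div_pos hδ hCpos)
    refine ⟨min (1/2) (Real.sqrt (δ/C) / 2), ?_, ?_, ?_⟩
    · positivity
    · have h := min_le_left (1/2 : ℝ) (Real.sqrt (δ/C) / 2)
      linarith
    · have h := min_le_right (1/2 : ℝ) (Real.sqrt (δ/C) / 2)
      have h0 : (0:ℝ) ≤ min (1/2) (Real.sqrt (δ/C) / 2) :=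
        le_min (by norm_num) (by linarith)
      have h1 : 2 * min (1/2) (Real.sqrt (δ/C) / 2) ≤ Real.sqrt (δ/C) := by linarith
      have h2 : (2 * min (1/2) (Real.sqrt (δ/C) / 2))^2 ≤ (Real.sqrt (δ/C))^2 :=
        pow_le_pow_left₀ (by linarith) h1 2
      have h3 : (Real.sqrt (δ/C))^2 = δ/C := Real.sq_sqrt (le_of_lt (div_pos hδ hCpos))
      rw [h3] at h2
      calc C * (2 * min (1/2) (Real.sqrt (δ/C) / 2))^2 ≤ C * (δ/C) :=
            mul_le_mul_of_nonneg_left h2 hCpos.le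
        _ = δ := by field_simp
  have key : ∀ r : ℝ, 0 < r → r ≤ 2*ε₀ → ∃ l : ℝ,
      τ * l ^ 3 + l ^ 2 + (δ + τ) * r ^ 2 * l + r ^ 2 = 0 ∧
      |l - (-(1 / τ) + δ * r ^ 2)| ≤ C * r ^ 4 := by
    intro r hr hr2
    have hr1 : r ≤ 1 := le_trans hr2 hε1
    have hr4 : (0:ℝ) < r^4 := by positivity
    have hrC : C * r^2 ≤ δ := by
      have h1 : r^2 ≤ (2*ε₀)^2 := pow_le_pow_left₀ hr.le hr2 2
      nlinarith [mul_le_mul_of_nonneg_left h1 hCpos.le]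
    have hCr4 : C*r^4 ≤ δ*r^2 := by
      nlinarith [mul_nonneg (sub_nonneg.2 hrC) (sq_nonneg r)]
    set P : ℝ → ℝ := fun l => τ * l ^ 3 + l ^ 2 + (δ + τ) * r ^ 2 * l + r ^ 2 with hP
    have hid : ∀ t : ℝ, τ * P (-(1/τ) + δ*r^2 + t) =
        t + (τ^2*(δ*r^2+t)^3 - 2*τ*(δ*r^2+t)^2 + τ*(δ+τ)*r^2*(δ*r^2+t)) := by
      intro t
      have hτ' : τ ≠ 0 := hτ.ne'
      simp only [hP]
      field_simp
      ring
    have hE : ∀ t : ℝ, |t| ≤ C*r^4 →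
        |τ^2*(δ*r^2+t)^3 - 2*τ*(δ*r^2+t)^2 + τ*(δ+τ)*r^2*(δ*r^2+t)| ≤ τ*M*r^4 := by
      intro t ht
      rw [abs_le] at ht
      obtain ⟨s, hsdef⟩ : ∃ s : ℝ, s = δ*r^2+t := ⟨_, rfl⟩
      rw [← hsdef]
      have hs : |s| ≤ 2*δ*r^2 := by
        rw [abs_le]
        constructor <;> [linarith [hsdef, hCr4, ht.1]; linarith [hsdef, hCr4, ht.2]]
      have hA0 : (0:ℝ) ≤ |s| := abs_nonneg s
      have htri : |τ^2*s^3 - 2*τ*s^2 + τ*(δ+τ)*r^2*s| ≤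
          |τ^2*s^3| + |2*τ*s^2| + |τ*(δ+τ)*r^2*s| := by
        calc |τ^2*s^3 - 2*τ*s^2 + τ*(δ+τ)*r^2*s|
            ≤ |τ^2*s^3 - 2*τ*s^2| + |τ*(δ+τ)*r^2*s| := abs_add_le _ _
          _ ≤ |τ^2*s^3| + |2*τ*s^2| + |τ*(δ+τ)*r^2*s| := by
              have := abs_sub (τ^2*s^3) (2*τ*s^2)
              linarith
      have e1 : |τ^2*s^3| = τ^2*|s|^3 := by
        rw [abs_mul, abs_pow, abs_pow, abs_of_pos hτ]
      have e2 : |2*τ*s^2| = 2*τ*|s|^2 := by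
        rw [abs_mul, abs_pow, abs_of_pos (by positivity : (0:ℝ) < 2*τ)]
      have e3 : |τ*(δ+τ)*r^2*s| = τ*(δ+τ)*r^2*|s| := by
        rw [abs_mul, abs_of_pos (by positivity : (0:ℝ) < τ*(δ+τ)*r^2)]
      rw [e1, e2, e3] at htri
      have h3 : |s|^3 ≤ (2*δ*r^2)^3 := pow_le_pow_left₀ hA0 hs 3
      have h2 : |s|^2 ≤ (2*δ*r^2)^2 := pow_le_pow_left₀ hA0 hs 2
      have hr64 : r^6 ≤ r^4 := by
        calc r^6 = r^4 * r^2 := by ring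
          _ ≤ r^4 * 1 := mul_le_mul_of_nonneg_left (by nlinarith) (le_of_lt hr4)
          _ = r^4 := by ring
      have b3 := mul_le_mul_of_nonneg_left h3 (sq_nonneg τ)
      have b2 := mul_le_mul_of_nonneg_left h2 (by positivity : (0:ℝ) ≤ 2*τ)
      have b1 := mul_le_mul_of_nonneg_left hs (by positivity : (0:ℝ) ≤ τ*(δ+τ)*r^2)
      have b3' : τ^2*(2*δ*r^2)^3 ≤ 8*τ^2*δ^3*r^4 := by
        have := mul_le_mul_of_nonneg_left hr64 (by positivity : (0:ℝ) ≤ 8*τ^2*δ^3)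
        nlinarith [this]
      have hfin : τ^2*|s|^3 + 2*τ*|s|^2 + τ*(δ+τ)*r^2*|s| ≤ τ*M*r^4 := by
        rw [hM]
        linarith [b3, b2, b1, b3']
      linarith
    have habsb : |C*r^4| ≤ C*r^4 := le_of_eq (abs_of_pos (by positivity))
    have habsa : |(-(C*r^4))| ≤ C*r^4 := by
      rw [abs_neg]; exact le_of_eq (abs_of_pos (by positivity))
    have hCr4' : C*r^4 = τ*M*r^4 + r^4 := by rw [hC]; ring
    have hPb : 0 ≤ P (-(1/τ) + δ*r^2 + C*r^4) := by
      have h1 := hid (C*r^4)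
      have h2 := hE (C*r^4) habsb
      rw [abs_le] at h2
      have hpos : 0 < τ * P (-(1/τ) + δ*r^2 + C*r^4) := by
        rw [h1]; linarith only [h2.1, hCr4', hr4]
      rcases mul_pos_iff.mp hpos with ⟨_, h⟩ | ⟨h, _⟩
      · linarith
      · linarith
    have hPa : P (-(1/τ) + δ*r^2 + -(C*r^4)) ≤ 0 := by
      have h1 := hid (-(C*r^4))
      have h2 := hE (-(C*r^4)) habsa
      rw [abs_le] at h2
      have hneg : τ * P (-(1/τ) + δ*r^2 + -(C*r^4)) < 0 := by
        rw [h1]; linarith only [h2.2, hCr4', hr4]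
      rcases mul_neg_iff.mp hneg with ⟨_, h⟩ | ⟨h, _⟩
      · linarith
      · linarith
    have hab : (-(1/τ) + δ*r^2 + -(C*r^4)) ≤ (-(1/τ) + δ*r^2 + C*r^4) := by
      have : 0 < C*r^4 := by positivity
      linarith
    have hcont : Continuous P := by
      simp only [hP]
      exact (((continuous_const.mul (continuous_pow 3)).add (continuous_pow 2)).add
        (continuous_const.mul continuous_id)).add continuous_const
    have hsub := intermediate_value_Icc hab hcont.continuousOn
    obtain ⟨l, hlmem, hl0⟩ := hsub ⟨hPa, hPb⟩
    refine ⟨l, hl0, ?_⟩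
    rw [abs_le]
    obtain ⟨hla, hlb⟩ := hlmem
    constructor <;> linarith
  classical
  refine ⟨ε₀, hε₀, fun r => if h : 0 < r ∧ r ≤ 2*ε₀ then (key r h.1 h.2).choose else 0,
    C, hCpos, ?_⟩
  intro r hr hr2
  have h : 0 < r ∧ r ≤ 2*ε₀ := ⟨hr, hr2⟩
  simp only [dif_pos h]
  exact (key r h.1 h.2).choose_spec
end

section
/- Let τ > 0 and δ > 0. For r > 0 sufficiently small the two complex conjugate roots λ_{2,3}(r) = μ_R(r) ± i μ_I(r) of τλ³ + λ² + (δ+τ)r²λ + r² = 0 satisfy μ_R(r) = -(δ/2) r² + O(r⁴) and μ_I(r) = r + O(r³) as r → 0. -/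
set_option maxHeartbeats 1000000

private lemma cube_abs_le {m x : ℝ} (h1 : -m ≤ x) (h2 : x ≤ m) :
    -(m^3) ≤ x^3 ∧ x^3 ≤ m^3 := by
  constructor <;>
    nlinarith [sq_nonneg (x + m), sq_nonneg (x - m), sq_nonneg x, sq_nonneg m]

private lemma sq_abs_le {m x : ℝ} (h1 : -m ≤ x) (h2 : x ≤ m) : x^2 ≤ m^2 := by
  nlinarith

theorem stmt_10 (τ δ : ℝ) (hτ : 0 < τ) (hδ : 0 < δ) :
    ∃ r₀ : ℝ, 0 < r₀ ∧ ∃ μR μI : ℝ → ℝ, ∃ C : ℝ, 0 < C ∧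
      ∀ r : ℝ, 0 < r → r < r₀ →
        μI r ≠ 0 ∧
        (τ : ℂ) * (μR r + μI r * Complex.I) ^ 3 + (μR r + μI r * Complex.I) ^ 2
          + ((δ : ℂ) + τ) * (r : ℂ) ^ 2 * (μR r + μI r * Complex.I) + (r : ℂ) ^ 2 = 0 ∧
        (τ : ℂ) * (μR r - μI r * Complex.I) ^ 3 + (μR r - μI r * Complex.I) ^ 2
          + ((δ : ℂ) + τ) * (r : ℂ) ^ 2 * (μR r - μI r * Complex.I) + (r : ℂ) ^ 2 = 0 ∧
        |μR r - (-(δ / 2) * r ^ 2)| ≤ C * r ^ 4 ∧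
        |μI r - r| ≤ C * r ^ 3 := by
  have hτ' : τ ≠ 0 := ne_of_gt hτ
  obtain ⟨K0, hK0⟩ : ∃ x : ℝ, x = 4*τ^2*δ^3 + 4*τ*δ^2 + τ*(δ+τ)*δ := ⟨_, rfl⟩
  have hK0pos : 0 < K0 := by rw [hK0]; positivity
  obtain ⟨C, hCdef⟩ : ∃ x : ℝ, x = K0 + 1 := ⟨_, rfl⟩
  have hCpos : 0 < C := by rw [hCdef]; positivity
  obtain ⟨ε, hε⟩ : ∃ x : ℝ, x = min (min (δ/(2*C)) (τ/(4*C))) 1 := ⟨_, rfl⟩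
  have hεpos : 0 < ε := by
    rw [hε]; exact lt_min (lt_min (by positivity) (by positivity)) one_pos
  have hε1 : ε ≤ 1 := by rw [hε]; exact min_le_right _ _
  have hεδ : ε ≤ δ/(2*C) := by rw [hε]; exact le_trans (min_le_left _ _) (min_le_left _ _)
  have hετ : ε ≤ τ/(4*C) := by rw [hε]; exact le_trans (min_le_left _ _) (min_le_right _ _)
  refine ⟨Real.sqrt ε, Real.sqrt_pos.mpr hεpos, ?_⟩
  -- basic bounds for small r
  have rb : ∀ r : ℝ, 0 < r → r < Real.sqrt ε →
      r ≤ 1 ∧ C * r^4 ≤ (δ/2) * r^2 ∧ C * r^4 ≤ (τ/4) * r^2 := by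
    intro r hr0 hr1
    have hr2 : (0:ℝ) < r^2 := by positivity
    have h2 : r^2 < ε := by
      have hs : Real.sqrt ε ^ 2 = ε := Real.sq_sqrt hεpos.le
      nlinarith [Real.sqrt_nonneg ε]
    have hle1 : r ≤ 1 := by nlinarith
    refine ⟨hle1, ?_, ?_⟩
    · have h3 : r^2 ≤ δ/(2*C) := le_trans h2.le hεδ
      rw [le_div_iff₀ (by positivity)] at h3
      nlinarith [mul_le_mul_of_nonneg_left h3 hr2.le]
    · have h3 : r^2 ≤ τ/(4*C) := le_trans h2.le hετ
      rw [le_div_iff₀ (by positivity)] at h3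
      nlinarith [mul_le_mul_of_nonneg_left h3 hr2.le]
  -- existence of the real part via IVT
  have key : ∀ r : ℝ, ∃ a : ℝ, 0 < r → r < Real.sqrt ε →
      (4*τ^2*a^3 + 4*τ*a^2 + (τ*(δ+τ)*r^2 + 1)*a + (δ/2)*r^2 = 0 ∧
        |a + (δ/2)*r^2| ≤ C*r^4) := by
    intro r
    by_cases hr : 0 < r ∧ r < Real.sqrt ε
    · obtain ⟨hr0, hr1⟩ := hr
      obtain ⟨hle1, hδb, hτb⟩ := rb r hr0 hr1
      have hr2 : (0:ℝ) < r^2 := by positivity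
      have hr4 : (0:ℝ) < r^4 := by positivity
      have hr21 : r^2 ≤ 1 := by nlinarith
      have hr64 : r^6 ≤ r^4 := by nlinarith [mul_le_mul_of_nonneg_left hr21 (le_of_lt hr4)]
      have hδr2 : (0:ℝ) < δ * r^2 := by positivity
      obtain ⟨aL, haL⟩ : ∃ x : ℝ, x = -(δ/2)*r^2 - C*r^4 := ⟨_, rfl⟩
      obtain ⟨aR, haR⟩ : ∃ x : ℝ, x = -(δ/2)*r^2 + C*r^4 := ⟨_, rfl⟩
      have hLR : aL ≤ aR := by rw [haL, haR]; nlinarith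
      set f : ℝ → ℝ := fun a => 4*τ^2*a^3 + 4*τ*a^2 + (τ*(δ+τ)*r^2 + 1)*a + (δ/2)*r^2 with hf
      have hcont : ContinuousOn f (Set.Icc aL aR) := by
        apply Continuous.continuousOn; fun_prop
      have hmL : -(δ*r^2) ≤ aL ∧ aL ≤ δ*r^2 := by
        constructor <;> rw [haL] <;> linarith
      have hmR : -(δ*r^2) ≤ aR ∧ aR ≤ δ*r^2 := by
        constructor <;> rw [haR] <;> linarith
      have hτδr : (0:ℝ) < τ*(δ+τ)*r^2 := by positivity
      have hCr : C*r^4 = 4*τ^2*δ^3*r^4 + 4*τ*δ^2*r^4 + τ*(δ+τ)*δ*r^4 + r^4 := by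
        rw [hCdef, hK0]; ring
      have hfL : f aL ≤ 0 := by
        have hc := cube_abs_le hmL.1 hmL.2
        have hsq := sq_abs_le hmL.1 hmL.2
        have h1 : aL + (δ/2)*r^2 = -(C*r^4) := by rw [haL]; ring
        have t1 := mul_le_mul_of_nonneg_left hc.2 (by positivity : (0:ℝ) ≤ 4*τ^2)
        have t2 := mul_le_mul_of_nonneg_left hsq (by positivity : (0:ℝ) ≤ 4*τ)
        have t3 := mul_le_mul_of_nonneg_left hmL.2 hτδr.le
        have t4 := mul_le_mul_of_nonneg_left hr64 (by positivity : (0:ℝ) ≤ 4*τ^2*δ^3)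
        simp only [hf]
        linarith only [t1, t2, t3, t4, h1, hCr, hr4]
      have hfR : 0 ≤ f aR := by
        have hc := cube_abs_le hmR.1 hmR.2
        have hsq := sq_abs_le hmR.1 hmR.2
        have h1 : aR + (δ/2)*r^2 = C*r^4 := by rw [haR]; ring
        have t1 := mul_le_mul_of_nonneg_left hc.1 (by positivity : (0:ℝ) ≤ 4*τ^2)
        have t3 := mul_le_mul_of_nonneg_left hmR.1 hτδr.le
        have t4 := mul_le_mul_of_nonneg_left hr64 (by positivity : (0:ℝ) ≤ 4*τ^2*δ^3)
        have t5 : (0:ℝ) ≤ 4*τ*aR^2 := by positivity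
        have t6 : (0:ℝ) ≤ 4*τ*δ^2*r^4 := by positivity
        simp only [hf]
        linarith only [t1, t3, t4, t5, t6, h1, hCr, hr4]
      have hmem : (0:ℝ) ∈ Set.Icc (f aL) (f aR) := ⟨hfL, hfR⟩
      obtain ⟨a, haI, haEq⟩ := intermediate_value_Icc hLR hcont hmem
      refine ⟨a, fun _ _ => ⟨haEq, ?_⟩⟩
      rw [abs_le]
      refine ⟨?_, ?_⟩
      · have := haI.1; rw [haL] at this; linarith
      · have := haI.2; rw [haR] at this; linarith
    · exact ⟨0, fun h1 h2 => absurd ⟨h1, h2⟩ hr⟩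
  choose A hA using key
  refine ⟨A, fun r => Real.sqrt (3*(A r)^2 + (2*(A r) + (δ+τ)*r^2)/τ),
    C + (3*δ^2 + 2*C/τ) + 1, by positivity, ?_⟩
  intro r hr0 hr1
  beta_reduce
  obtain ⟨hroot, hbound⟩ := hA r hr0 hr1
  obtain ⟨hle1, hδb, hτb⟩ := rb r hr0 hr1
  have hr2 : (0:ℝ) < r^2 := by positivity
  have hr3 : (0:ℝ) < r^3 := by positivity
  have hr4 : (0:ℝ) < r^4 := by positivity
  have hδr2 : (0:ℝ) < δ * r^2 := by positivity
  have hτr2 : (0:ℝ) < τ * r^2 := by positivity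
  set a : ℝ := A r with ha
  clear_value a
  have hbd := abs_le.mp hbound
  have habs : |a| ≤ δ*r^2 := by
    rw [abs_le]; constructor <;> [linarith [hbd.1]; linarith [hbd.2]]
  have habs' := abs_le.mp habs
  set s : ℝ := 3*a^2 + (2*a + (δ+τ)*r^2)/τ with hs
  clear_value s
  have hsτ : τ * s = 3*τ*a^2 + 2*a + (δ+τ)*r^2 := by
    rw [hs]; field_simp; ring
  have hτs : 0 < τ * s := by
    rw [hsτ]
    nlinarith [hbd.1, mul_nonneg hτ.le (sq_nonneg a)]
  have hs_pos : 0 < s := by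
    by_contra h
    push_neg at h
    nlinarith [mul_nonneg hτ.le (neg_nonneg.mpr h)]
  set b : ℝ := Real.sqrt s with hb
  clear_value b
  have hb0 : 0 < b := hb ▸ Real.sqrt_pos.mpr hs_pos
  have hb2 : b^2 = s := hb ▸ Real.sq_sqrt hs_pos.le
  have e1 : τ * b^2 = 3*τ*a^2 + 2*a + (δ+τ)*r^2 := by rw [hb2]; exact hsτ
  have hτc : (τ:ℂ) ≠ 0 := Complex.ofReal_ne_zero.mpr hτ'
  have e1c : (τ:ℂ) * (b:ℂ)^2 = 3*(τ:ℂ)*(a:ℂ)^2 + 2*(a:ℂ) + ((δ:ℂ)+(τ:ℂ))*(r:ℂ)^2 := by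
    have h := congrArg (fun x : ℝ => (x:ℂ)) e1
    push_cast at h
    linear_combination h
  have e2c : 4*(τ:ℂ)^2*(a:ℂ)^3 + 4*(τ:ℂ)*(a:ℂ)^2
      + ((τ:ℂ)*((δ:ℂ)+(τ:ℂ))*(r:ℂ)^2 + 1)*(a:ℂ) + ((δ:ℂ)/2)*(r:ℂ)^2 = 0 := by
    have h := congrArg (fun x : ℝ => (x:ℂ)) hroot
    push_cast at h
    linear_combination h
  refine ⟨ne_of_gt hb0, ?_, ?_, ?_, ?_⟩
  · have hP : (τ:ℂ) * ((τ:ℂ) * ((a:ℂ) + (b:ℂ)*Complex.I)^3 + ((a:ℂ) + (b:ℂ)*Complex.I)^2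
        + ((δ:ℂ)+(τ:ℂ))*(r:ℂ)^2*((a:ℂ) + (b:ℂ)*Complex.I) + (r:ℂ)^2) = 0 := by
      linear_combination (-2:ℂ)*e2c
        + (-3*(τ:ℂ)*(a:ℂ) - 1 - (τ:ℂ)*(b:ℂ)*Complex.I)*e1c
        + ((τ:ℂ)^2*(3*(a:ℂ)*(b:ℂ)^2 + (b:ℂ)^3*Complex.I) + (τ:ℂ)*(b:ℂ)^2)*Complex.I_sq
    exact (mul_eq_zero.mp hP).resolve_left hτc
  · have hP : (τ:ℂ) * ((τ:ℂ) * ((a:ℂ) - (b:ℂ)*Complex.I)^3 + ((a:ℂ) - (b:ℂ)*Complex.I)^2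
        + ((δ:ℂ)+(τ:ℂ))*(r:ℂ)^2*((a:ℂ) - (b:ℂ)*Complex.I) + (r:ℂ)^2) = 0 := by
      linear_combination (-2:ℂ)*e2c
        + (-3*(τ:ℂ)*(a:ℂ) - 1 + (τ:ℂ)*(b:ℂ)*Complex.I)*e1c
        + ((τ:ℂ)^2*(3*(a:ℂ)*(b:ℂ)^2 - (b:ℂ)^3*Complex.I) + (τ:ℂ)*(b:ℂ)^2)*Complex.I_sq
    exact (mul_eq_zero.mp hP).resolve_left hτc
  · rw [show a - (-(δ / 2) * r ^ 2) = a + (δ/2)*r^2 by ring]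
    refine hbound.trans ?_
    have h0 : (0:ℝ) ≤ (3*δ^2 + 2*C/τ + 1) * r^4 := by positivity
    linarith only [h0]
  · have hdiff : b^2 - r^2 = 3*a^2 + 2*((a + (δ/2)*r^2)/τ) := by
      rw [hb2, hs]; field_simp; ring
    have hd1 : (a + (δ/2)*r^2)/τ ≤ C*r^4/τ := by gcongr; exact hbd.2
    have hd2 : (-(C*r^4))/τ ≤ (a + (δ/2)*r^2)/τ := by gcongr; exact hbd.1
    have hsq : a^2 ≤ δ^2*r^4 := by nlinarith only [habs'.1, habs'.2, sq_nonneg a]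
    have hKb : |b^2 - r^2| ≤ (3*δ^2 + 2*C/τ)*r^4 := by
      rw [hdiff, abs_le]
      have hnd : (-(C*r^4))/τ = -(C*r^4/τ) := by ring
      rw [hnd] at hd2
      have hrw : (3*δ^2 + 2*C/τ)*r^4 = 3*(δ^2*r^4) + 2*(C*r^4/τ) := by ring
      rw [hrw]
      constructor
      · linarith only [sq_nonneg a, hd2, hsq]
      · linarith only [hd1, hsq]
    have habsmul : |b^2 - r^2| = |b - r| * (b + r) := by
      rw [← abs_of_nonneg (show (0:ℝ) ≤ b + r by positivity), ← abs_mul]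
      congr 1; ring
    rw [habsmul] at hKb
    have h2 : |b - r| * r ≤ |b - r| * (b + r) :=
      mul_le_mul_of_nonneg_left (by linarith [hb0.le]) (abs_nonneg _)
    have hfin : |b - r| ≤ (3*δ^2 + 2*C/τ)*r^3 := by
      refine le_of_mul_le_mul_right ?_ hr0
      calc |b - r| * r ≤ |b - r| * (b + r) := h2
        _ ≤ (3*δ^2 + 2*C/τ)*r^4 := hKb
        _ = ((3*δ^2 + 2*C/τ)*r^3)*r := by ring
    refine hfin.trans ?_
    have h0 : (0:ℝ) ≤ (C + 1) * r^3 := by positivity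
    linarith only [h0]
end

section
/- Let τ > 0 and δ > 0. For r > 0 sufficiently large, the cubic τλ³ + λ² + (δ+τ)r²λ + r² = 0 has a real root λ₁(r) with λ₁(r) = -1/(δ+τ) + O(r^{-2}), and complex conjugate roots with real part μ_R(r) = -δ/(2τ(δ+τ)) + O(r^{-2}) and imaginary part μ_I(r) = √((δ+τ)/τ)·r + O(r^{-1}) as r → +∞. -/
open Set
set_option maxHeartbeats 1000000

private lemma stmt11_aux_m (u v l : ℝ) (hu0 : 0 < u) (hv0 : 0 < v)
    (h1 : u ≤ -l) (h2 : -l ≤ u + 1) : (-(l+v)/2)^2 ≤ ((u+1+v)/2)^2 := by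
  nlinarith [mul_nonneg (by linarith : (0:ℝ) ≤ u + 1 - (-l))
    (by linarith : (0:ℝ) ≤ u + 1 + 2*v + l)]

theorem stmt_11 (τ δ : ℝ) (hτ : 0 < τ) (hδ : 0 < δ) :
    ∃ N₀ : ℝ, 0 < N₀ ∧ ∃ l₁ μR μI : ℝ → ℝ, ∃ C : ℝ, 0 < C ∧
      ∀ r : ℝ, N₀ ≤ r →
        (τ * l₁ r ^ 3 + l₁ r ^ 2 + (δ + τ) * r ^ 2 * l₁ r + r ^ 2 = 0) ∧
        μI r ≠ 0 ∧
        ((τ : ℂ) * (μR r + μI r * Complex.I) ^ 3 + (μR r + μI r * Complex.I) ^ 2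
          + ((δ : ℂ) + τ) * (r : ℂ) ^ 2 * (μR r + μI r * Complex.I) + (r : ℂ) ^ 2 = 0) ∧
        |l₁ r - (-(1 / (δ + τ)))| ≤ C * r ^ (-2 : ℤ) ∧
        |μR r - (-(δ / (2 * τ * (δ + τ))))| ≤ C * r ^ (-2 : ℤ) ∧
        |μI r - Real.sqrt ((δ + τ) / τ) * r| ≤ C * r ^ (-1 : ℤ) := by
  classical
  obtain ⟨a, ha_def⟩ : ∃ x : ℝ, x = δ + τ := ⟨_, rfl⟩
  rw [show δ + τ = a from ha_def.symm]
  have ha : 0 < a := by rw [ha_def]; positivity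
  obtain ⟨L, hL_def⟩ : ∃ x : ℝ, x = -(1/a) := ⟨_, rfl⟩
  rw [show -(1/a) = L from hL_def.symm]
  obtain ⟨K, hK_def⟩ : ∃ x : ℝ, x = (δ/a^3 + 2/a + 2)/a := ⟨_, rfl⟩
  have hK : 0 < K := by rw [hK_def]; positivity
  -- existence of the real root
  have hexist : ∀ r : ℝ, 1 ≤ r → K ≤ r^2 →
      ∃ x ∈ Icc (L - K/r^2) L, τ*x^3 + x^2 + a*r^2*x + r^2 = 0 := by
    intro r hr1 hrK
    have hr0 : 0 < r := lt_of_lt_of_le one_pos hr1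
    have hr2 : 0 < r^2 := by positivity
    obtain ⟨ε, hε_def⟩ : ∃ x : ℝ, x = K / r ^ 2 := ⟨_, rfl⟩
    have hε0 : 0 < ε := by rw [hε_def]; positivity
    have hε1 : ε ≤ 1 := by rw [hε_def, div_le_one hr2]; exact hrK
    have hPL : τ*L^3 + L^2 + a*r^2*L + r^2 = δ/a^3 := by
      rw [hL_def, ha_def]; field_simp; ring
    have hneg : τ*(L-ε)^3 + (L-ε)^2 + a*r^2*(L-ε) + r^2 < 0 := by
      have haux : τ*(L-ε)^3 + (L-ε)^2 + a*r^2*(L-ε) + r^2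
          = (τ*L^3 + L^2 + a*r^2*L + r^2)
            + (τ*((L-ε)^3 - L^3) + ((L-ε)^2 - L^2)) - a*r^2*ε := by ring
      have hε2 : a*r^2*ε = a*K := by rw [hε_def]; field_simp
      have hE : τ*((L-ε)^3 - L^3) + ((L-ε)^2 - L^2) ≤ 2/a + 1 := by
        rw [hL_def]
        have h1a : 0 < 1/a := by positivity
        have hEu : ∀ u : ℝ, 0 < u →
            τ*((-u-ε)^3 - (-u)^3) + ((-u-ε)^2 - (-u)^2) ≤ 2*u + 1 := by
          intro u hu
          nlinarith [mul_nonneg (sub_nonneg.mpr hε1) hu.le,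
            mul_nonneg (sub_nonneg.mpr hε1) (by linarith : (0:ℝ) ≤ 1+ε),
            mul_nonneg (mul_nonneg hτ.le hε0.le)
              (by positivity : (0:ℝ) ≤ 3*u^2 + 3*ε*u + ε^2)]
        have h := hEu (1/a) h1a
        calc τ*((-(1/a)-ε)^3 - (-(1/a))^3) + ((-(1/a)-ε)^2 - (-(1/a))^2) ≤ 2*(1/a) + 1 := h
          _ = 2/a + 1 := by ring
      have haK : a*K = δ/a^3 + 2/a + 2 := by rw [hK_def]; field_simp
      rw [haux, hε2, hPL, haK]; linarith
    have hpos : 0 < τ*L^3 + L^2 + a*r^2*L + r^2 := by rw [hPL]; positivity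
    have hle : L - ε ≤ L := by linarith
    have hcont : ContinuousOn (fun x => τ*x^3 + x^2 + a*r^2*x + r^2) (Icc (L-ε) L) := by
      fun_prop
    obtain ⟨x, hx, hPx⟩ := intermediate_value_Icc hle hcont ⟨hneg.le, hpos.le⟩
    exact ⟨x, hε_def ▸ hx, hPx⟩
  -- constants
  obtain ⟨Q, hQ_def⟩ : ∃ x : ℝ, x = ((1/a + 1 + 1/τ)/2)^2 := ⟨_, rfl⟩
  have hQ0 : 0 ≤ Q := hQ_def ▸ sq_nonneg _
  obtain ⟨B, hB_def⟩ : ∃ x : ℝ, x = a^2*K/τ + Q := ⟨_, rfl⟩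
  have haKτ : 0 ≤ a^2*K/τ := by positivity
  have hB0 : 0 < B := by rw [hB_def, hQ_def]; positivity
  obtain ⟨s, hs_def⟩ : ∃ x : ℝ, x = Real.sqrt (a/τ) := ⟨_, rfl⟩
  rw [show Real.sqrt (a/τ) = s from hs_def.symm]
  have hs0 : 0 < s := by rw [hs_def]; exact Real.sqrt_pos.mpr (by positivity)
  obtain ⟨C, hC_def⟩ : ∃ x : ℝ, x = K + B/s + 1 := ⟨_, rfl⟩
  have hBs0 : 0 ≤ B/s := by positivity
  have hC0 : 0 < C := by rw [hC_def]; linarith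
  have hBsC : B/s ≤ C := by rw [hC_def]; linarith
  have hKC : K ≤ C := by rw [hC_def]; linarith
  obtain ⟨N₀, hN₀_def⟩ : ∃ x : ℝ, x = max (max 1 (Real.sqrt K)) (Real.sqrt (τ*(B+1)/a)) :=
    ⟨_, rfl⟩
  have hN₀1 : (1:ℝ) ≤ N₀ := by
    rw [hN₀_def]; exact le_trans (le_max_left _ _) (le_max_left _ _)
  -- the root functions
  obtain ⟨l₁f, hl₁f_def⟩ : ∃ f : ℝ → ℝ, f = fun r =>
      if h : ∃ x ∈ Icc (L - K/r^2) L, τ*x^3 + x^2 + a*r^2*x + r^2 = 0 then h.choose else L :=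
    ⟨_, rfl⟩
  refine ⟨N₀, by linarith, l₁f, fun r => -(l₁f r + 1/τ)/2,
    fun r => Real.sqrt (-(r^2)/(τ * l₁f r) - (-(l₁f r + 1/τ)/2)^2), C, hC0, ?_⟩
  intro r hr
  beta_reduce
  have hr1 : 1 ≤ r := le_trans hN₀1 hr
  have hr0 : 0 < r := lt_of_lt_of_le one_pos hr1
  have hr2 : 0 < r^2 := by positivity
  have hrK : K ≤ r^2 := by
    have h1 : Real.sqrt K ≤ r := by
      rw [hN₀_def] at hr
      exact le_trans (le_trans (le_max_right _ _) (le_max_left _ _)) hr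
    nlinarith [Real.sq_sqrt hK.le, Real.sqrt_nonneg K]
  have hrB : τ*(B+1)/a ≤ r^2 := by
    have h1 : Real.sqrt (τ*(B+1)/a) ≤ r := by
      rw [hN₀_def] at hr
      exact le_trans (le_max_right _ _) hr
    nlinarith [Real.sq_sqrt (by positivity : (0:ℝ) ≤ τ*(B+1)/a),
      Real.sqrt_nonneg (τ*(B+1)/a)]
  have hex := hexist r hr1 hrK
  obtain ⟨l, hmem, hroot, hlf⟩ :
      ∃ l, l ∈ Icc (L - K/r^2) L ∧ (τ*l^3 + l^2 + a*r^2*l + r^2 = 0) ∧ l₁f r = l :=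
    ⟨hex.choose, hex.choose_spec.1, hex.choose_spec.2, by rw [hl₁f_def]; exact dif_pos hex⟩
  clear hex
  rw [hlf]
  -- basic facts about l
  have hKr2 : K/r^2 ≤ 1 := by rw [div_le_one hr2]; exact hrK
  have hlL : l ≤ L := hmem.2
  have hlge : L - K/r^2 ≤ l := hmem.1
  have hLneg : L < 0 := by rw [hL_def]; simp; positivity
  have hlneg : l < 0 := lt_of_le_of_lt hlL hLneg
  have hlne : l ≠ 0 := ne_of_lt hlneg
  have hτl : τ*l ≠ 0 := mul_ne_zero hτ.ne' hlne
  have hla : 1/a ≤ -l := by rw [hL_def] at hlL; linarith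
  have hla' : -l ≤ 1/a + 1 := by rw [hL_def] at hlge; linarith
  have habsl : |l - L| ≤ K/r^2 := abs_le.mpr ⟨by linarith, by linarith⟩
  have habsl' := abs_le.mp habsl
  have hz2 : r ^ (-2 : ℤ) = 1/r^2 := by rw [zpow_neg]; norm_num
  have hz1 : r ^ (-1 : ℤ) = 1/r := by rw [zpow_neg]; norm_num
  have hKr2pos : 0 < K/r^2 := by positivity
  obtain ⟨m, hm_def⟩ : ∃ x : ℝ, x = -(l + 1/τ)/2 := ⟨_, rfl⟩
  rw [show -(l + 1/τ)/2 = m from hm_def.symm]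
  obtain ⟨q, hq_def⟩ : ∃ x : ℝ, x = -(r^2)/(τ*l) := ⟨_, rfl⟩
  rw [show -(r^2)/(τ*l) = q from hq_def.symm]
  obtain ⟨w, hw_def⟩ : ∃ x : ℝ, x = q - m^2 := ⟨_, rfl⟩
  rw [show q - m^2 = w from hw_def.symm]
  -- bounds on q
  have ht0 : 0 < τ*(-l) := mul_pos hτ (neg_pos.mpr hlneg)
  have hq_eq : q = r^2/(τ*(-l)) := by rw [hq_def]; ring
  have hσ0 : 0 ≤ -l - 1/a := by linarith
  have hσr : (-l - 1/a) * r^2 ≤ K := by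
    have h1 : -l - 1/a ≤ K/r^2 := by rw [hL_def] at hlge; linarith
    calc (-l - 1/a) * r^2 ≤ (K/r^2) * r^2 := mul_le_mul_of_nonneg_right h1 (le_of_lt hr2)
      _ = K := by field_simp
  have hq_ub : q ≤ (a/τ)*r^2 := by
    rw [hq_eq, div_le_iff₀ ht0]
    have h1 : a*r^2*(1/a) ≤ a*r^2*(-l) :=
      mul_le_mul_of_nonneg_left hla (by positivity)
    have h2 : a*r^2*(1/a) = r^2 := by field_simp
    have h3 : (a/τ)*r^2*(τ*(-l)) = a*r^2*(-l) := by field_simp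
    rw [h3]
    calc r^2 = a*r^2*(1/a) := h2.symm
      _ ≤ a*r^2*(-l) := h1
  have hla2 : 1 ≤ a*(-l) := by
    calc (1:ℝ) = a*(1/a) := by field_simp
      _ ≤ a*(-l) := mul_le_mul_of_nonneg_left hla ha.le
  have hσr2 : (a*(-l) - 1)*r^2 ≤ a*K := by
    have e : (a*(-l) - 1)*r^2 = a*((-l - 1/a)*r^2) := by field_simp
    rw [e]; exact mul_le_mul_of_nonneg_left hσr ha.le
  have hq_lb : (a/τ)*r^2 - a^2*K/τ ≤ q := by
    rw [hq_eq, le_div_iff₀ ht0]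
    have h1 : ((a/τ)*r^2 - a^2*K/τ)*(τ*(-l)) = (a*r^2 - a^2*K)*(-l) := by
      field_simp
    rw [h1]
    have hq_lb' : (a*r^2 - a^2*K)*(a*(-l)) ≤ a*(r^2) := by
      linarith [mul_nonneg ha.le (sub_nonneg.mpr hσr2),
        mul_nonneg (by positivity : (0:ℝ) ≤ a^2*K) (sub_nonneg.mpr hla2)]
    have e2 : a*((a*r^2 - a^2*K)*(-l)) = (a*r^2 - a^2*K)*(a*(-l)) := by ring
    exact le_of_mul_le_mul_left (by rw [e2]; exact hq_lb') ha
  -- bound on m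
  have hm_b : m^2 ≤ Q := by
    obtain ⟨u, hu⟩ : ∃ x : ℝ, x = 1/a := ⟨_, rfl⟩
    obtain ⟨v, hv⟩ : ∃ x : ℝ, x = 1/τ := ⟨_, rfl⟩
    have hu0 : 0 < u := by rw [hu]; positivity
    have hv0 : 0 < v := by rw [hv]; positivity
    have hlau : u ≤ -l := hu ▸ hla
    have hlau' : -l ≤ u + 1 := by rw [hu]; exact hla'
    have e1 : m = -(l+v)/2 := by rw [hm_def, hv]
    have e2 : Q = ((u + 1 + v)/2)^2 := by rw [hQ_def, hu, hv]
    rw [e1, e2]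
    exact stmt11_aux_m u v l hu0 hv0 hlau hlau'
  -- the quantity under the square root
  have haB : B + 1 ≤ (a/τ)*r^2 := by
    have h1 : (a/τ) * (τ*(B+1)/a) ≤ (a/τ)*r^2 :=
      mul_le_mul_of_nonneg_left hrB (by positivity)
    have h2 : (a/τ) * (τ*(B+1)/a) = B + 1 := by field_simp
    linarith
  have hw_diff : |w - (a/τ)*r^2| ≤ B := by
    rw [hw_def, hB_def]
    have hm2 := sq_nonneg m
    apply abs_le.mpr
    constructor <;> linarith
  have hw_diff' := abs_le.mp hw_diff
  have hw1 : 1 ≤ w := by linarith [hw_diff'.1]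
  have hw0 : 0 ≤ w := by linarith
  have hμI_sq : (Real.sqrt w)^2 = w := Real.sq_sqrt hw0
  have hμI_pos : 0 < Real.sqrt w := Real.sqrt_pos.mpr (by linarith)
  have hμI_nonneg : 0 ≤ Real.sqrt w := hμI_pos.le
  -- algebraic identities
  have hsum : τ*l*(m^2 + (Real.sqrt w)^2) = -(r^2) := by
    rw [hμI_sq, hw_def, hq_def]
    field_simp
    ring
  have hbid : τ*l + 2*τ*m = -1 := by
    rw [hm_def]; field_simp; ring
  -- the complex root
  have hcomplex : (τ : ℂ) * ((m:ℂ) + (Real.sqrt w : ℝ) * Complex.I) ^ 3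
      + ((m:ℂ) + (Real.sqrt w : ℝ) * Complex.I) ^ 2
      + ((δ : ℂ) + τ) * (r : ℂ) ^ 2 * ((m:ℂ) + (Real.sqrt w : ℝ) * Complex.I)
      + (r : ℂ) ^ 2 = 0 := by
    set z : ℂ := (m:ℂ) + (Real.sqrt w : ℝ) * Complex.I with hz_def
    have hq' : z^2 - 2*(m:ℂ)*z + ((m:ℂ)^2 + ((Real.sqrt w : ℝ):ℂ)^2) = 0 := by
      rw [hz_def]
      linear_combination ((Real.sqrt w : ℝ):ℂ)^2 * Complex.I_sq
    have hrootC : (τ:ℂ)*(l:ℂ)^3 + (l:ℂ)^2 + (a:ℂ)*(r:ℂ)^2*(l:ℂ) + (r:ℂ)^2 = 0 := by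
      exact_mod_cast congrArg (Complex.ofReal) hroot
    have hsC : (τ:ℂ)*(l:ℂ)*(((m:ℝ):ℂ)^2 + ((Real.sqrt w : ℝ):ℂ)^2) = -((r:ℂ)^2) := by
      exact_mod_cast congrArg (Complex.ofReal) hsum
    have hbC : (τ:ℂ)*(l:ℂ) + 2*(τ:ℂ)*(m:ℂ) = -1 := by
      exact_mod_cast congrArg (Complex.ofReal) hbid
    have hlC : (l:ℂ) ≠ 0 := by exact_mod_cast hlne
    have haC : ((a:ℝ):ℂ) = (δ:ℂ) + (τ:ℂ) := by rw [ha_def]; push_cast; ring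
    have key : (l:ℂ) * ((τ:ℂ)*z^3 + z^2 + (a:ℂ)*(r:ℂ)^2*z + (r:ℂ)^2) = 0 := by
      linear_combination ((τ:ℂ)*(l:ℂ)*(z-(l:ℂ))) * hq' + ((l:ℂ)*z*(z-(l:ℂ))) * hbC
        + z * hrootC + ((l:ℂ) - z) * hsC
    have h0 : (τ:ℂ)*z^3 + z^2 + (a:ℂ)*(r:ℂ)^2*z + (r:ℂ)^2 = 0 :=
      (mul_eq_zero.mp key).resolve_left hlC
    rw [← haC]
    exact h0
  -- asymptotic bounds
  have hCl : |l - L| ≤ C * r ^ (-2 : ℤ) := by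
    rw [hz2]
    calc |l - L| ≤ K/r^2 := habsl
      _ ≤ C/r^2 := by gcongr
      _ = C * (1/r^2) := by ring
  have hCm : |m - (-(δ/(2*τ*a)))| ≤ C * r ^ (-2 : ℤ) := by
    rw [hz2]
    have hid : m - (-(δ/(2*τ*a))) = -(l - L)/2 := by
      rw [hm_def, hL_def, ha_def]; field_simp; ring
    rw [hid]
    calc |(-(l - L)/2)| ≤ K/r^2 := abs_le.mpr ⟨by linarith, by linarith⟩
      _ ≤ C/r^2 := by gcongr
      _ = C * (1/r^2) := by ring
  have hCI : |Real.sqrt w - s * r| ≤ C * r ^ (-1 : ℤ) := by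
    rw [hz1]
    have hy2 : (s*r)^2 = (a/τ)*r^2 := by
      rw [hs_def, mul_pow, Real.sq_sqrt (by positivity : (0:ℝ) ≤ a/τ)]
    have hy0 : 0 < s*r := mul_pos hs0 hr0
    have hd2 : |(Real.sqrt w)^2 - (s*r)^2| ≤ B := by rw [hμI_sq, hy2]; exact hw_diff
    have h1 : |Real.sqrt w - s*r| * (s*r) ≤ |Real.sqrt w - s*r| * (Real.sqrt w + s*r) :=
      mul_le_mul_of_nonneg_left (by linarith) (abs_nonneg _)
    have h2 : |Real.sqrt w - s*r| * (Real.sqrt w + s*r) = |(Real.sqrt w)^2 - (s*r)^2| := by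
      rw [← abs_of_nonneg (by positivity : (0:ℝ) ≤ Real.sqrt w + s*r), ← abs_mul]
      congr 1; ring
    have h3 : |Real.sqrt w - s*r| ≤ B/(s*r) := by
      rw [le_div_iff₀ hy0]; linarith [h1, h2.symm ▸ hd2]
    have h4 : B/(s*r) = (B/s)*(1/r) := by field_simp
    calc |Real.sqrt w - s*r| ≤ B/(s*r) := h3
      _ = (B/s)*(1/r) := h4
      _ ≤ C*(1/r) := mul_le_mul_of_nonneg_right hBsC (by positivity)
  exact ⟨hroot, ne_of_gt hμI_pos, hcomplex, hCl, hCm, hCI⟩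
end

section
/- Let μ : ℝⁿ → ℝ be smooth on {|ξ| ≥ N₀} with |∂_ξ^γ μ(ξ)| ≤ C_γ |ξ|^{-2-|γ|} for all |γ| ≥ 1, and suppose μ(ξ) ≤ -c₀ < 0 there. Then for every multi-index α there exist C, c > 0 such that |∂_ξ^α e^{μ(ξ) t}| ≤ C e^{-c t} |ξ|^{-|α|} for all t ≥ 0 and |ξ| ≥ N₀. -/
open Set Filter Topology Nat

private lemma aux_exp_iteratedDeriv (t : ℝ) : ∀ i : ℕ,
    iteratedDeriv i (fun y : ℝ => Real.exp (y * t)) = fun y => t ^ i * Real.exp (y * t) := by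
  intro i
  induction i with
  | zero => funext y; simp
  | succ k ih =>
    rw [iteratedDeriv_succ, ih]
    funext y
    have h : HasDerivAt (fun y : ℝ => t ^ k * Real.exp (y * t))
        (t ^ k * (Real.exp (y * t) * t)) y :=
      ((hasDerivAt_mul_const t).exp).const_mul (t ^ k)
    rw [h.deriv]; ring

private lemma aux_pow_le {c : ℝ} (hc : 0 < c) (i : ℕ) {t : ℝ} (ht : 0 ≤ t) :
    t ^ i ≤ i ! * (1 / c) ^ i * Real.exp (c * t) := by
  have h1 : (c * t) ^ i / i ! ≤ Real.exp (c * t) := by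
    calc (c * t) ^ i / i ! ≤ ∑ k ∈ Finset.range (i + 1), (c * t) ^ k / k ! :=
          Finset.single_le_sum (f := fun k => (c * t) ^ k / (k ! : ℝ))
            (fun k _ => by positivity) (Finset.self_mem_range_succ i)
      _ ≤ Real.exp (c * t) := Real.sum_le_exp_of_nonneg (by positivity) _
  have hfac : (0 : ℝ) < i ! := by positivity
  have heq : t ^ i = (i ! * (1 / c) ^ i) * ((c * t) ^ i / i !) := by
    rw [mul_pow]
    field_simp
    rw [mul_assoc, ← mul_pow, one_div_mul_cancel hc.ne', one_pow, mul_one]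
  rw [heq]
  calc (i ! * (1 / c) ^ i) * ((c * t) ^ i / i !)
      ≤ (i ! * (1 / c) ^ i) * Real.exp (c * t) := by
        apply mul_le_mul_of_nonneg_left h1 (by positivity)
    _ = i ! * (1 / c) ^ i * Real.exp (c * t) := by ring

private lemma aux_eqfull {E G : Type*} [NormedAddCommGroup E] [NormedSpace ℝ E]
    [NormedAddCommGroup G] [NormedSpace ℝ G] {S U : Set E} (hU : IsOpen U) (hUS : U ⊆ S)
    (f : E → G) (k : ℕ) {ξ : E} (hξ : ξ ∈ U) :
    iteratedFDerivWithin ℝ k f S ξ = iteratedFDeriv ℝ k f ξ := by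
  rw [← iteratedFDerivWithin_inter (hU.mem_nhds hξ),
    Set.inter_eq_self_of_subset_right hUS]
  exact iteratedFDerivWithin_of_isOpen k hU hξ

private lemma aux_uniform {P : ℕ → ℝ → Prop}
    (hmono : ∀ i C C', C ≤ C' → P i C → P i C')
    (h : ∀ i, ∃ C, 0 ≤ C ∧ P i C) (m : ℕ) : ∃ C, 0 ≤ C ∧ ∀ i ≤ m, P i C := by
  induction m with
  | zero =>
    obtain ⟨C, h0, hP⟩ := h 0
    exact ⟨C, h0, fun i hi => by rw [Nat.le_zero.mp hi]; exact hP⟩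
  | succ k ih =>
    obtain ⟨C, hC0, hC⟩ := ih
    obtain ⟨D, hD0, hD⟩ := h (k + 1)
    refine ⟨max C D, le_max_of_le_left hC0, fun i hi => ?_⟩
    rcases Nat.le_add_one_iff.mp hi with h' | h'
    · exact hmono i C _ (le_max_left _ _) (hC i h')
    · rw [h']; exact hmono _ D _ (le_max_right _ _) hD

theorem stmt_17 (n : ℕ) (N₀ c₀ : ℝ) (hN₀ : 0 < N₀) (hc₀ : 0 < c₀)
    (μ : EuclideanSpace ℝ (Fin n) → ℝ)
    (hsm : ContDiffOn ℝ (⊤ : ℕ∞) μ {ξ | N₀ ≤ ‖ξ‖})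
    (hderiv : ∀ m : ℕ, 1 ≤ m → ∃ C : ℝ, ∀ ξ, N₀ ≤ ‖ξ‖ →
      ‖iteratedFDeriv ℝ m μ ξ‖ ≤ C * ‖ξ‖ ^ (-2 - (m : ℝ)))
    (hneg : ∀ ξ, N₀ ≤ ‖ξ‖ → μ ξ ≤ -c₀) :
    ∀ m : ℕ, ∃ C c : ℝ, 0 < C ∧ 0 < c ∧ ∀ t : ℝ, 0 ≤ t → ∀ ξ, N₀ ≤ ‖ξ‖ →
      ‖iteratedFDeriv ℝ m (fun ζ => Real.exp (μ ζ * t)) ξ‖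
        ≤ C * Real.exp (-c * t) * ‖ξ‖ ^ (-(m : ℝ)) := by
  classical
  set S : Set (EuclideanSpace ℝ (Fin n)) := {ξ | N₀ ≤ ‖ξ‖} with hSdef
  set U : Set (EuclideanSpace ℝ (Fin n)) := {ξ | N₀ < ‖ξ‖} with hUdef
  have hUopen : IsOpen U := isOpen_lt continuous_const continuous_norm
  have hUS : U ⊆ S := fun ζ hζ => show N₀ ≤ ‖ζ‖ from le_of_lt hζ
  -- half-space helpers for unique differentiability
  have hlin : ∀ ξ₀ : EuclideanSpace ℝ (Fin n),
      IsLinearMap ℝ (fun ξ : EuclideanSpace ℝ (Fin n) => (inner ℝ ξ₀ ξ : ℝ)) :=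
    fun ξ₀ => ⟨fun x y => inner_add_right ξ₀ x y, fun c x => real_inner_smul_right ξ₀ x c⟩
  have hH : ∀ ξ₀ : EuclideanSpace ℝ (Fin n), N₀ ≤ ‖ξ₀‖ →
      UniqueDiffWithinAt ℝ {ξ | N₀ * ‖ξ₀‖ ≤ (inner ℝ ξ₀ ξ : ℝ)} ξ₀ := by
    intro ξ₀ hξ₀
    have hpos : 0 < ‖ξ₀‖ := lt_of_lt_of_le hN₀ hξ₀
    have hconv : Convex ℝ {ξ : EuclideanSpace ℝ (Fin n) | N₀ * ‖ξ₀‖ ≤ (inner ℝ ξ₀ ξ : ℝ)} :=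
      convex_halfSpace_ge (hlin ξ₀) _
    have hmem : (2 : ℝ) • ξ₀ ∈
        interior {ξ : EuclideanSpace ℝ (Fin n) | N₀ * ‖ξ₀‖ ≤ (inner ℝ ξ₀ ξ : ℝ)} := by
      apply mem_interior.mpr
      refine ⟨{ξ | N₀ * ‖ξ₀‖ < (inner ℝ ξ₀ ξ : ℝ)}, fun ζ hζ => show N₀ * ‖ξ₀‖ ≤ (inner ℝ ξ₀ ζ : ℝ) from le_of_lt hζ, ?_, ?_⟩
      · exact isOpen_lt continuous_const (continuous_const.inner continuous_id)
      · show N₀ * ‖ξ₀‖ < (inner ℝ ξ₀ ((2 : ℝ) • ξ₀) : ℝ)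
        rw [real_inner_smul_right, real_inner_self_eq_norm_mul_norm]
        nlinarith
    have huc := uniqueDiffOn_convex hconv ⟨_, hmem⟩
    refine huc ξ₀ ?_
    show N₀ * ‖ξ₀‖ ≤ (inner ℝ ξ₀ ξ₀ : ℝ)
    rw [real_inner_self_eq_norm_mul_norm]
    nlinarith
  have hHsubS : ∀ ξ₀ : EuclideanSpace ℝ (Fin n), N₀ ≤ ‖ξ₀‖ →
      {ξ | N₀ * ‖ξ₀‖ ≤ (inner ℝ ξ₀ ξ : ℝ)} ⊆ S := by
    intro ξ₀ hξ₀ ξ hξ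
    have h1 : (inner ℝ ξ₀ ξ : ℝ) ≤ ‖ξ₀‖ * ‖ξ‖ := real_inner_le_norm ξ₀ ξ
    have hpos : 0 < ‖ξ₀‖ := lt_of_lt_of_le hN₀ hξ₀
    have h2 : N₀ * ‖ξ₀‖ ≤ ‖ξ₀‖ * ‖ξ‖ := le_trans hξ h1
    show N₀ ≤ ‖ξ‖
    nlinarith
  have hSuniq : UniqueDiffOn ℝ S := fun ξ₀ hξ₀ => (hH ξ₀ hξ₀).mono (hHsubS ξ₀ hξ₀)
  have hUx : ∀ ξ₀ : EuclideanSpace ℝ (Fin n), ‖ξ₀‖ = N₀ →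
      UniqueDiffWithinAt ℝ (U ∪ {ξ₀}) ξ₀ := by
    intro ξ₀ hb
    refine (hH ξ₀ hb.ge).mono ?_
    intro ξ hξ
    rcases eq_or_lt_of_le (show N₀ ≤ ‖ξ‖ from hHsubS ξ₀ hb.ge hξ) with heq | hlt
    · right
      have h1 : (inner ℝ ξ₀ ξ : ℝ) = ‖ξ₀‖ * ‖ξ‖ := by
        refine le_antisymm (real_inner_le_norm _ _) ?_
        have : N₀ * ‖ξ₀‖ ≤ (inner ℝ ξ₀ ξ : ℝ) := hξ
        rw [hb] at this
        rw [hb, ← heq]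
        linarith
      have h2 := inner_eq_norm_mul_iff_real.mp h1
      have h3 : ξ₀ = ξ := by
        rw [← heq, hb] at h2
        exact smul_right_injective _ hN₀.ne' h2
      simp [← h3]
    · left; exact hlt
  have hclos : ∀ ξ₀, ξ₀ ∈ S → (𝓝[U] ξ₀).NeBot := by
    intro ξ₀ hξ₀
    rw [← mem_closure_iff_nhdsWithin_neBot]
    apply Metric.mem_closure_iff.mpr
    intro ε hε
    have hpos : 0 < ‖ξ₀‖ := lt_of_lt_of_le hN₀ hξ₀
    set δ : ℝ := ε / (2 * ‖ξ₀‖) with hδ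
    have hδpos : 0 < δ := by positivity
    refine ⟨(1 + δ) • ξ₀, ?_, ?_⟩
    · show N₀ < ‖(1 + δ) • ξ₀‖
      rw [norm_smul, Real.norm_eq_abs, abs_of_pos (by linarith)]
      nlinarith [show N₀ ≤ ‖ξ₀‖ from hξ₀]
    · rw [dist_eq_norm]
      have h2 : ξ₀ - (1 + δ) • ξ₀ = (-δ) • ξ₀ := by module
      rw [h2, norm_smul, Real.norm_eq_abs, abs_neg, abs_of_pos hδpos]
      have hk : δ * ‖ξ₀‖ = ε / 2 := by rw [hδ]; field_simp
      nlinarith [hk]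
  have hlimit : ∀ (u v : EuclideanSpace ℝ (Fin n) → ℝ) (ξ₀), ξ₀ ∈ S →
      ContinuousWithinAt u S ξ₀ → ContinuousWithinAt v S ξ₀ →
      (∀ ζ ∈ U, u ζ ≤ v ζ) → u ξ₀ ≤ v ξ₀ := by
    intro u v ξ₀ hξ₀ hu hv hle
    haveI := hclos ξ₀ hξ₀
    have h1 : Tendsto u (𝓝[U] ξ₀) (𝓝 (u ξ₀)) := hu.mono_left (nhdsWithin_mono _ hUS)
    have h2 : Tendsto v (𝓝[U] ξ₀) (𝓝 (v ξ₀)) := hv.mono_left (nhdsWithin_mono _ hUS)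
    exact le_of_tendsto_of_tendsto h1 h2 (eventually_mem_nhdsWithin.mono hle)
  have hrpow_cont : ∀ (Cst e : ℝ) (ξ₀ : EuclideanSpace ℝ (Fin n)), ξ₀ ∈ S →
      ContinuousWithinAt (fun ζ => Cst * ‖ζ‖ ^ e) S ξ₀ := by
    intro Cst e ξ₀ hb
    apply ContinuousAt.continuousWithinAt
    apply ContinuousAt.mul continuousAt_const
    exact (Real.continuousAt_rpow_const ‖ξ₀‖ e
      (Or.inl (lt_of_lt_of_le hN₀ hb).ne')).comp continuous_norm.continuousAt
  -- boundary comparison of full and within derivatives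
  have hbound : ∀ (t : ℝ) (m : ℕ) (ξ : EuclideanSpace ℝ (Fin n)), ‖ξ‖ = N₀ →
      ‖iteratedFDeriv ℝ m (fun ζ => Real.exp (μ ζ * t)) ξ‖ ≤
        ‖iteratedFDerivWithin ℝ m (fun ζ => Real.exp (μ ζ * t)) S ξ‖ ∨
      iteratedFDeriv ℝ m (fun ζ => Real.exp (μ ζ * t)) ξ = 0 := by
    intro t m ξ hb
    have hξS : ξ ∈ S := show N₀ ≤ ‖ξ‖ from hb.ge
    have hFc : ContDiffOn ℝ (⊤ : ℕ∞) (fun ζ => Real.exp (μ ζ * t)) S :=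
      Real.contDiff_exp.comp_contDiffOn (hsm.mul contDiffOn_const)
    cases m with
    | zero =>
      left
      rw [norm_iteratedFDeriv_zero, norm_iteratedFDerivWithin_zero]
    | succ k =>
      by_cases hd : DifferentiableAt ℝ (iteratedFDeriv ℝ k (fun ζ => Real.exp (μ ζ * t))) ξ
      · left
        haveI := hclos ξ hξS
        have heqU : ∀ ζ ∈ U, iteratedFDerivWithin ℝ k (fun ζ => Real.exp (μ ζ * t)) S ζ
            = iteratedFDeriv ℝ k (fun ζ => Real.exp (μ ζ * t)) ζ :=
          fun ζ hζ => aux_eqfull hUopen hUS _ k hζ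
        have hWcont : ContinuousWithinAt
            (iteratedFDerivWithin ℝ k (fun ζ => Real.exp (μ ζ * t)) S) S ξ :=
          (hFc.continuousOn_iteratedFDerivWithin (by exact_mod_cast le_top) hSuniq) ξ hξS
        have hval : iteratedFDeriv ℝ k (fun ζ => Real.exp (μ ζ * t)) ξ
            = iteratedFDerivWithin ℝ k (fun ζ => Real.exp (μ ζ * t)) S ξ := by
          have h1 : Tendsto (iteratedFDeriv ℝ k (fun ζ => Real.exp (μ ζ * t))) (𝓝[U] ξ)
              (𝓝 (iteratedFDeriv ℝ k (fun ζ => Real.exp (μ ζ * t)) ξ)) :=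
            hd.continuousAt.continuousWithinAt
          have h2 : Tendsto (iteratedFDerivWithin ℝ k (fun ζ => Real.exp (μ ζ * t)) S) (𝓝[U] ξ)
              (𝓝 (iteratedFDerivWithin ℝ k (fun ζ => Real.exp (μ ζ * t)) S ξ)) :=
            hWcont.mono_left (nhdsWithin_mono _ hUS)
          exact tendsto_nhds_unique h1
            (Tendsto.congr' (eventually_mem_nhdsWithin.mono fun ζ hζ => heqU ζ hζ) h2)
        have hklt : (k : WithTop ℕ∞) < ((⊤ : ℕ∞) : WithTop ℕ∞) := by
          exact_mod_cast ENat.coe_lt_top k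
        have hWd : DifferentiableWithinAt ℝ
            (iteratedFDerivWithin ℝ k (fun ζ => Real.exp (μ ζ * t)) S) S ξ :=
          (hFc.differentiableOn_iteratedFDerivWithin hklt hSuniq) ξ hξS
        have hsub : U ∪ {ξ} ⊆ S := union_subset hUS (singleton_subset_iff.mpr hξS)
        have hB : HasFDerivWithinAt (iteratedFDerivWithin ℝ k (fun ζ => Real.exp (μ ζ * t)) S)
            (fderivWithin ℝ (iteratedFDerivWithin ℝ k (fun ζ => Real.exp (μ ζ * t)) S) S ξ)
            (U ∪ {ξ}) ξ :=
          hWd.hasFDerivWithinAt.mono hsub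
        have hA : HasFDerivWithinAt (iteratedFDerivWithin ℝ k (fun ζ => Real.exp (μ ζ * t)) S)
            (fderiv ℝ (iteratedFDeriv ℝ k (fun ζ => Real.exp (μ ζ * t))) ξ) (U ∪ {ξ}) ξ := by
          refine (hd.hasFDerivAt.hasFDerivWithinAt).congr ?_ hval.symm
          intro ζ hζ
          rcases hζ with h | h
          · exact heqU ζ h
          · rw [mem_singleton_iff.mp h]; exact hval.symm
        have hABeq := (hUx ξ hb).eq hA hB
        rw [← norm_fderiv_iteratedFDeriv, hABeq, norm_fderivWithin_iteratedFDerivWithin]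
      · right
        have h0 : ‖iteratedFDeriv ℝ (k+1) (fun ζ => Real.exp (μ ζ * t)) ξ‖ = 0 := by
          rw [← norm_fderiv_iteratedFDeriv, fderiv_zero_of_not_differentiableAt hd]
          exact ContinuousLinearMap.opNorm_zero
        exact norm_eq_zero.mp h0
  -- within-bounds for derivatives of μ on all of S
  have hcontiFDW : ∀ i : ℕ, ContinuousOn (iteratedFDerivWithin ℝ i μ S) S :=
    fun i => hsm.continuousOn_iteratedFDerivWithin (by exact_mod_cast le_top) hSuniq
  have hμwithin : ∀ i : ℕ, 1 ≤ i → ∃ C, 0 ≤ C ∧ ∀ ξ ∈ S,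
      ‖iteratedFDerivWithin ℝ i μ S ξ‖ ≤ C * ‖ξ‖ ^ (-2 - (i : ℝ)) := by
    intro i hi
    obtain ⟨C, hC⟩ := hderiv i hi
    refine ⟨max C 0, le_max_right _ _, ?_⟩
    have hint : ∀ ζ ∈ U, ‖iteratedFDerivWithin ℝ i μ S ζ‖ ≤ max C 0 * ‖ζ‖ ^ (-2 - (i : ℝ)) := by
      intro ζ hζ
      rw [aux_eqfull hUopen hUS μ i hζ]
      exact le_trans (hC ζ (hUS hζ)) (mul_le_mul_of_nonneg_right (le_max_left _ _)
        (Real.rpow_nonneg (norm_nonneg _) _))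
    intro ξ hξ
    exact hlimit _ _ ξ hξ ((hcontiFDW i ξ hξ).norm) (hrpow_cont _ _ ξ hξ) hint
  have hμU : ∀ m : ℕ, ∃ C, 0 ≤ C ∧ ∀ i ≤ m, 1 ≤ i → ∀ ξ, ξ ∈ S →
      ‖iteratedFDerivWithin ℝ i μ S ξ‖ ≤ C * ‖ξ‖ ^ (-2 - (i : ℝ)) := by
    intro m
    refine aux_uniform (P := fun i C => 1 ≤ i → ∀ ξ, ξ ∈ S →
      ‖iteratedFDerivWithin ℝ i μ S ξ‖ ≤ C * ‖ξ‖ ^ (-2 - (i : ℝ))) ?_ ?_ m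
    · intro i C C' hCC' hP hi ξ hξ
      exact le_trans (hP hi ξ hξ)
        (mul_le_mul_of_nonneg_right hCC' (Real.rpow_nonneg (norm_nonneg _) _))
    · intro i
      by_cases hi : 1 ≤ i
      · obtain ⟨C, h0, hC⟩ := hμwithin i hi
        exact ⟨C, h0, fun _ ξ hξ => hC ξ hξ⟩
      · exact ⟨0, le_rfl, fun h => absurd h hi⟩
  -- main argument
  intro m
  obtain ⟨Cμ, hCμ0, hCμ⟩ := hμU m
  set M : ℝ := max 1 (Cμ * N₀ ^ (-2 : ℝ)) with hMdef
  have hM1 : (1 : ℝ) ≤ M := le_max_left _ _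
  set A : ℝ := max 1 (2 / c₀) with hAdef
  have hA1 : (1 : ℝ) ≤ A := le_max_left _ _
  have hg : ∀ t : ℝ, 0 ≤ t → ∀ i ≤ m, ∀ y : ℝ, y ≤ -c₀ →
      ‖iteratedFDeriv ℝ i (fun z : ℝ => Real.exp (z * t)) y‖
        ≤ ((m ! : ℝ) * A ^ m) * Real.exp (-(c₀ / 2) * t) := by
    intro t ht i him y hy
    rw [norm_iteratedFDeriv_eq_norm_iteratedDeriv, aux_exp_iteratedDeriv t i]
    rw [Real.norm_eq_abs, abs_mul, abs_pow, Real.abs_exp, abs_of_nonneg ht]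
    have h1 : Real.exp (y * t) ≤ Real.exp (-c₀ * t) :=
      Real.exp_le_exp.mpr (mul_le_mul_of_nonneg_right hy ht)
    have h2 : t ^ i ≤ i ! * (1 / (c₀ / 2)) ^ i * Real.exp ((c₀ / 2) * t) :=
      aux_pow_le (half_pos hc₀) i ht
    have h3 : (i ! : ℝ) * (1 / (c₀ / 2)) ^ i ≤ (m ! : ℝ) * A ^ m := by
      have hfa : (i ! : ℝ) ≤ (m ! : ℝ) := by exact_mod_cast Nat.factorial_le him
      have hB0 : (0 : ℝ) ≤ 1 / (c₀ / 2) := by positivity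
      have hBA : (1 / (c₀ / 2) : ℝ) ≤ A := by
        rw [one_div_div]; exact le_max_right _ _
      have h4 : ((1 / (c₀ / 2) : ℝ)) ^ i ≤ A ^ i := pow_le_pow_left₀ hB0 hBA i
      have h5 : A ^ i ≤ A ^ m := pow_le_pow_right₀ hA1 him
      exact mul_le_mul hfa (le_trans h4 h5) (by positivity) (by positivity)
    calc t ^ i * Real.exp (y * t)
        ≤ (i ! * (1 / (c₀ / 2)) ^ i * Real.exp ((c₀ / 2) * t)) * Real.exp (-c₀ * t) :=
          mul_le_mul h2 h1 (Real.exp_pos _).le (by positivity)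
      _ = (i ! * (1 / (c₀ / 2)) ^ i) * Real.exp (-(c₀ / 2) * t) := by
          rw [mul_assoc, ← Real.exp_add]
          have harg : c₀ / 2 * t + -c₀ * t = -(c₀ / 2) * t := by ring
          rw [harg]
      _ ≤ ((m ! : ℝ) * A ^ m) * Real.exp (-(c₀ / 2) * t) :=
          mul_le_mul_of_nonneg_right h3 (Real.exp_pos _).le
  have hW : ∀ t : ℝ, 0 ≤ t → ∀ ξ, N₀ ≤ ‖ξ‖ →
      ‖iteratedFDerivWithin ℝ m (fun ζ => Real.exp (μ ζ * t)) S ξ‖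
        ≤ ((m ! : ℝ) * ((m ! : ℝ) * A ^ m) * M ^ m) * Real.exp (-(c₀ / 2) * t)
          * ‖ξ‖ ^ (-(m : ℝ)) := by
    intro t ht ξ hξ
    have hξS : ξ ∈ S := hξ
    have hnormpos : 0 < ‖ξ‖ := lt_of_lt_of_le hN₀ hξ
    have hcomp : ((fun z : ℝ => Real.exp (z * t)) ∘ μ) = fun ζ => Real.exp (μ ζ * t) := rfl
    have key := norm_iteratedFDerivWithin_comp_le (𝕜 := ℝ)
      (g := fun z : ℝ => Real.exp (z * t)) (f := μ) (n := m) (N := ((⊤ : ℕ∞) : WithTop ℕ∞))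
      (t := (Set.univ : Set ℝ)) (s := S)
      (C := ((m ! : ℝ) * A ^ m) * Real.exp (-(c₀ / 2) * t)) (D := M / ‖ξ‖)
      ((Real.contDiff_exp.comp (contDiff_id.mul contDiff_const)).contDiffOn) hsm (by exact_mod_cast le_top)
      uniqueDiffOn_univ hSuniq (Set.mapsTo_univ _ _) hξS ?_ ?_
    · rw [hcomp] at key
      refine le_trans key (le_of_eq ?_)
      have hDm : (M / ‖ξ‖) ^ m = M ^ m * ‖ξ‖ ^ (-(m : ℝ)) := by
        rw [Real.rpow_neg (norm_nonneg _), Real.rpow_natCast, div_pow, div_eq_mul_inv]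
      rw [hDm]; ring
    · intro i hi
      rw [iteratedFDerivWithin_univ]
      exact hg t ht i hi (μ ξ) (hneg ξ hξ)
    · intro i h1i him
      have hb2 : ‖ξ‖ ^ (-2 - (i : ℝ)) = ‖ξ‖ ^ (-2 : ℝ) * (‖ξ‖ ^ i)⁻¹ := by
        have hsplit : (-2 - (i : ℝ)) = (-2) + (-(i : ℝ)) := by ring
        rw [hsplit, Real.rpow_add hnormpos, Real.rpow_neg (norm_nonneg ξ) (i : ℝ), Real.rpow_natCast ‖ξ‖ i]
      have hstep : Cμ * ‖ξ‖ ^ (-2 : ℝ) ≤ M ^ i := by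
        have hbase : ‖ξ‖ ^ (-2 : ℝ) ≤ N₀ ^ (-2 : ℝ) :=
          Real.rpow_le_rpow_of_nonpos hN₀ hξ (by norm_num)
        calc Cμ * ‖ξ‖ ^ (-2 : ℝ) ≤ Cμ * N₀ ^ (-2 : ℝ) :=
              mul_le_mul_of_nonneg_left hbase hCμ0
          _ ≤ M := le_max_right _ _
          _ ≤ M ^ i := le_self_pow₀ hM1 (by omega)
      refine le_trans (hCμ i him h1i ξ hξS) ?_
      rw [hb2, div_pow, div_eq_mul_inv]
      calc Cμ * (‖ξ‖ ^ (-2 : ℝ) * (‖ξ‖ ^ i)⁻¹)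
          = (Cμ * ‖ξ‖ ^ (-2 : ℝ)) * (‖ξ‖ ^ i)⁻¹ := by ring
        _ ≤ M ^ i * (‖ξ‖ ^ i)⁻¹ := mul_le_mul_of_nonneg_right hstep (by positivity)
  refine ⟨(m ! : ℝ) * ((m ! : ℝ) * A ^ m) * M ^ m, c₀ / 2, by positivity, half_pos hc₀, ?_⟩
  intro t ht ξ hξ
  rcases lt_or_eq_of_le hξ with hlt | hbd
  · rw [← aux_eqfull hUopen hUS _ m (show ξ ∈ U from hlt)]
    exact hW t ht ξ hξ
  · rcases hbound t m ξ hbd.symm with h | h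
    · exact le_trans h (hW t ht ξ hξ)
    · rw [h, norm_zero]
      positivity
end
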